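/- For every α with 1 < α < ((1+√5)/2)² one has g₃(α) > max(1, α − 1); in particular, on this interval α·g₃(α) > α(α − 1). -/

import Mathlib

/-!
Write `D(α) = (1−α)² + 4α(2α²−2α+1)`, so that `c < g₃(α)` as soon as `(2αc + α − 1)² < D(α)`.
For `c = 1` the gap is `D(α) − (3α−1)² = 8α(α−1)² > 0`, and for `c = α − 1` it is
`D(α) − (2α²−α−1)² = −4α²(α² − 3α + 1)`, positive exactly between the roots `ψ²` and `φ²`
of `x² − 3x + 1`, where `φ = (1+√5)/2` and `ψ = (1−√5)/2`. Since `ψ² < 1`, the interval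
`1 < α < φ²` lies between these roots.
-/

/-- `g₃(α) = (1 − α + √((1−α)² + 4α(2α²−2α+1))) / (2α)`. -/
noncomputable def g3 (α : ℝ) : ℝ :=
  (1 - α + Real.sqrt ((1 - α) ^ 2 + 4 * α * (2 * α ^ 2 - 2 * α + 1))) / (2 * α)

open Real
open scoped goldenRatio

theorem lt_g3_of_sq_lt {α c : ℝ} (hα : 0 < α)
    (h : (2 * α * c + α - 1) ^ 2 < (1 - α) ^ 2 + 4 * α * (2 * α ^ 2 - 2 * α + 1)) :
    c < g3 α := by
  rw [g3, lt_div_iff₀ (by positivity)]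
  linarith [lt_sqrt_of_sq_lt h]

theorem one_lt_g3 {α : ℝ} (hα : 0 < α) (hα1 : α ≠ 1) : 1 < g3 α := by
  refine lt_g3_of_sq_lt hα ?_
  have hgap : 0 < 8 * α * (α - 1) ^ 2 := by
    have : α - 1 ≠ 0 := sub_ne_zero.mpr hα1
    positivity
  linear_combination hgap

theorem sub_one_lt_g3 {α : ℝ} (hq : α ^ 2 - 3 * α + 1 < 0) : α - 1 < g3 α := by
  have hα : 0 < α := by nlinarith [sq_nonneg α]
  refine lt_g3_of_sq_lt hα ?_
  have hgap : 0 < 4 * α ^ 2 * -(α ^ 2 - 3 * α + 1) := by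
    have := neg_pos.mpr hq
    positivity
  linear_combination hgap

theorem sq_sub_three_mul_add_one_eq (x : ℝ) :
    x ^ 2 - 3 * x + 1 = (x - φ ^ 2) * (x - ψ ^ 2) := by
  have hsum : φ ^ 2 + ψ ^ 2 = 3 := by
    rw [goldenRatio_sq, goldenConj_sq, add_add_add_comm, goldenRatio_add_goldenConj]
    norm_num
  have hprod : φ ^ 2 * ψ ^ 2 = 1 := by
    rw [← mul_pow, goldenRatio_mul_goldenConj]
    norm_num
  linear_combination x * hsum - hprod

theorem sq_sub_three_mul_add_one_neg {x : ℝ} (h1 : 1 < x) (h2 : x < φ ^ 2) :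
    x ^ 2 - 3 * x + 1 < 0 := by
  have hψ : ψ ^ 2 < 1 := by
    rw [goldenConj_sq]
    linarith [goldenConj_neg]
  rw [sq_sub_three_mul_add_one_eq]
  exact mul_neg_of_neg_of_pos (by linarith) (by linarith)

/-- For `1 < α < ((1+√5)/2)²` one has `g₃(α) > max(1, α − 1)`; in particular
`α·g₃(α) > α(α − 1)` on this interval. -/
theorem g3_improvement_range (α : ℝ) (h1 : 1 < α)
    (h2 : α < ((1 + Real.sqrt 5) / 2) ^ 2) :
    max 1 (α - 1) < g3 α ∧ α * (α - 1) < α * g3 α := by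
  have hα : 0 < α := by linarith
  have hq : α ^ 2 - 3 * α + 1 < 0 := sq_sub_three_mul_add_one_neg h1 h2
  have hlt : α - 1 < g3 α := sub_one_lt_g3 hq
  exact ⟨max_lt (one_lt_g3 hα h1.ne') hlt, mul_lt_mul_of_pos_left hlt hα⟩
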